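/- arXiv:2012.04093 — 3 statements merged into one kernel-verified Lean document; each statement's English description precedes it below -/
import Mathlib

section
/- For every n : ℕ, the operation Fmul n makes the level-n set a commutative monoid with identity E^[n] 1: for all a, b, c in Set.range (E^[n]), one has Fmul n a b ∈ Set.range (E^[n]), Fmul n a (E^[n] 1) = a, Fmul n (E^[n] 1) a = a, Fmul n a b = Fmul n b a, and Fmul n a (Fmul n b c) = Fmul n (Fmul n a b) c. (This is the multiplicative part of the paper's Theorem that the level-n set with F_n and F_{n+1} is a commutative semiring.) -/
/-- The exponential function `E a = w ^ a` on ℕ, for a fixed base `w`. -/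
def E (w : ℕ) (a : ℕ) : ℕ := w ^ a

/-- Bennett's commutative hyperoperation `F_n` (level-`n` addition):
`Fadd w n a b = E^[n] (L^[n] a + L^[n] b)` where `L = Nat.log w`. -/
def Fadd (w : ℕ) (n : ℕ) (a b : ℕ) : ℕ :=
  (E w)^[n] ((Nat.log w)^[n] a + (Nat.log w)^[n] b)

/-- Bennett's commutative hyperoperation `F_{n+1}` (level-`n` multiplication):
`Fmul w n a b = E^[n] (L^[n] a * L^[n] b)` where `L = Nat.log w`. -/
def Fmul (w : ℕ) (n : ℕ) (a b : ℕ) : ℕ :=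
  (E w)^[n] ((Nat.log w)^[n] a * (Nat.log w)^[n] b)

/-! Since `L ∘ E = id`, the map `E^[n]` is a bijection from `ℕ` onto the level-`n` set that
carries ordinary multiplication to `Fmul n`, so the monoid laws of `(ℕ, *, 1)` transfer. -/

lemma log_leftInverse_E {w : ℕ} (hw : 1 < w) : Function.LeftInverse (Nat.log w) (E w) :=
  Nat.log_pow hw

lemma Fmul_iterate_E {w : ℕ} (hw : 1 < w) (n x y : ℕ) :
    Fmul w n ((E w)^[n] x) ((E w)^[n] y) = (E w)^[n] (x * y) := by
  simp only [Fmul, ((log_leftInverse_E hw).iterate n).eq]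

/-- The level-`n` set with `Fmul n` is a commutative monoid with identity `E^[n] 1`. -/
theorem Fmul_comm_monoid (w : ℕ) (hw : 2 ≤ w) (n : ℕ) :
    ∀ a ∈ Set.range ((E w)^[n]), ∀ b ∈ Set.range ((E w)^[n]),
      ∀ c ∈ Set.range ((E w)^[n]),
      Fmul w n a b ∈ Set.range ((E w)^[n]) ∧
      Fmul w n a ((E w)^[n] 1) = a ∧
      Fmul w n ((E w)^[n] 1) a = a ∧
      Fmul w n a b = Fmul w n b a ∧
      Fmul w n a (Fmul w n b c) = Fmul w n (Fmul w n a b) c := by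
  rintro a ⟨x, rfl⟩ b ⟨y, rfl⟩ c ⟨z, rfl⟩
  simp only [Fmul_iterate_E hw]
  exact ⟨⟨x * y, rfl⟩, by rw [mul_one], by rw [one_mul], by rw [mul_comm], by rw [mul_assoc]⟩
end

section
/- For every n : ℕ and all a, b, c in the level-n set Set.range (E^[n]), the operation Fmul n distributes over Fadd n: Fmul n a (Fadd n b c) = Fadd n (Fmul n a b) (Fmul n a c). (This is the distributivity part of the paper's Theorem that the level-n set with F_n and F_{n+1} is a commutative semiring.) -/
lemma Fadd_iterate_E {w : ℕ} (hw : 1 < w) (n x y : ℕ) :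
    Fadd w n ((E w)^[n] x) ((E w)^[n] y) = (E w)^[n] (x + y) := by
  simp only [Fadd, ((log_leftInverse_E hw).iterate n) _]

/-- On the level-`n` set, `Fmul n` distributes over `Fadd n`. -/
theorem Fmul_distrib_Fadd (w : ℕ) (hw : 2 ≤ w) (n : ℕ) :
    ∀ a ∈ Set.range ((E w)^[n]), ∀ b ∈ Set.range ((E w)^[n]),
      ∀ c ∈ Set.range ((E w)^[n]),
      Fmul w n a (Fadd w n b c) = Fadd w n (Fmul w n a b) (Fmul w n a c) := by
  rintro a ⟨x, rfl⟩ b ⟨y, rfl⟩ c ⟨z, rfl⟩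
  simp only [Fadd_iterate_E hw, Fmul_iterate_E hw, mul_add]
end

section
/- The Grothendieck-type ring built on the level-n set has no nonzero zero divisors: for every n : ℕ and all x, y, u, v ∈ Set.range (E^[n]), if Fadd n (Fmul n x u) (Fmul n y v) = Fadd n (Fmul n y u) (Fmul n x v) (i.e. the product of the difference-classes represented by (x,y) and (u,v) is the zero class), then x = y or u = v (i.e. one of the two factor classes is the zero class). (This is the key step in the paper's Theorem that (ℤ_{n,□}, ⊕_{n,□}, ⊗_{n,□}) is an integral domain.) -/
/-! `E^[n]` is a bijection from `ℕ` onto the level-`n` set with inverse `L^[n]`, and it carries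
`+` and `*` to `Fadd n` and `Fmul n`. So the hypothesis says `a c + b d = b c + a d` for the
exponents, i.e. `(a - b) (c - d) = 0` in `ℤ`. -/

section LevelN

variable {w : ℕ} (hw : 1 < w) (n : ℕ)
include hw

theorem leftInverse_log_iterate_E_iterate :
    Function.LeftInverse (Nat.log w)^[n] (E w)^[n] :=
  Function.LeftInverse.iterate (fun a => Nat.log_pow hw a) n

theorem E_iterate_injective : Function.Injective (E w)^[n] :=
  (leftInverse_log_iterate_E_iterate hw n).injective

theorem Fadd_E_iterate (a b : ℕ) :
    Fadd w n ((E w)^[n] a) ((E w)^[n] b) = (E w)^[n] (a + b) := by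
  simp only [Fadd, leftInverse_log_iterate_E_iterate hw n _]

theorem Fmul_E_iterate (a b : ℕ) :
    Fmul w n ((E w)^[n] a) ((E w)^[n] b) = (E w)^[n] (a * b) := by
  simp only [Fmul, leftInverse_log_iterate_E_iterate hw n _]

end LevelN

theorem Nat.eq_or_eq_of_mul_add_mul_eq_mul_add_mul {a b c d : ℕ}
    (h : a * c + b * d = b * c + a * d) : a = b ∨ c = d := by
  have hZ : (a * c + b * d : ℤ) = b * c + a * d := by exact_mod_cast h
  have hprod : ((a : ℤ) - b) * ((c : ℤ) - d) = 0 := by linear_combination hZ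
  rcases Int.mul_eq_zero.mp hprod with hab | hcd
  · exact Or.inl (by omega)
  · exact Or.inr (by omega)

/-- The Grothendieck-type ring built on the level-`n` set has no nonzero zero
divisors: if the product of the difference-classes of `(x,y)` and `(u,v)` is the
zero class, then one of the factors is the zero class. -/
theorem no_zero_divisors (w : ℕ) (hw : 2 ≤ w) (n : ℕ) :
    ∀ x ∈ Set.range ((E w)^[n]), ∀ y ∈ Set.range ((E w)^[n]),
    ∀ u ∈ Set.range ((E w)^[n]), ∀ v ∈ Set.range ((E w)^[n]),
      Fadd w n (Fmul w n x u) (Fmul w n y v) =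
        Fadd w n (Fmul w n y u) (Fmul w n x v) →
      x = y ∨ u = v := by
  rintro x ⟨a, rfl⟩ y ⟨b, rfl⟩ u ⟨c, rfl⟩ v ⟨d, rfl⟩ h
  simp only [Fmul_E_iterate hw, Fadd_E_iterate hw] at h
  exact (Nat.eq_or_eq_of_mul_add_mul_eq_mul_add_mul (E_iterate_injective hw n h)).imp
    (congrArg _) (congrArg _)
end
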